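/- Harmonic conjugacy is an involution: Let A and B be distinct points, and let υ be the map on the points of the line AB defined by υ(X) = h(A,B;X). Then υ is a projectivity of the range of AB onto itself, υ∘υ is the identity, and υ is not the identity. -/

import Mathlib

open Configuration

universe u
variable (P L : Type u) [Membership P L]

/-- Three points are collinear if some line passes through all three. -/
def Col (A B C : P) : Prop := ∃ l : L, A ∈ l ∧ B ∈ l ∧ C ∈ l

/-- Every line of `L` is incident with at least `n` distinct points. -/
def LinesHaveAtLeast (n : ℕ) : Prop :=
  ∀ l : L, ∃ s : Finset P, n ≤ s.card ∧ ∀ X ∈ s, X ∈ l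
/-- `IsTriangle A B C ab bc ca` : the points `A B C` form a triangle with sides
`ab = AB`, `bc = BC`, `ca = CA`; noncollinearity is expressed by each vertex
lying outside the opposite side. -/
def IsTriangle (A B C : P) (ab bc ca : L) : Prop :=
  A ∈ ab ∧ B ∈ ab ∧ B ∈ bc ∧ C ∈ bc ∧ C ∈ ca ∧ A ∈ ca ∧ A ∉ bc ∧ B ∉ ca ∧ C ∉ ab

/-- Two triangles are distinct if corresponding vertices are distinct and
corresponding sides are distinct. -/
def DistinctTriangles (A B C A' B' C' : P) (ab bc ca ab' bc' ca' : L) : Prop :=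
  A ≠ A' ∧ B ≠ B' ∧ C ≠ C' ∧ ab ≠ ab' ∧ bc ≠ bc' ∧ ca ≠ ca'

/-- Two triangles are perspective from the center `O` : the lines joining
corresponding vertices are concurrent at `O`, and `O` lies outside each of the
six sides. -/
def PerspectiveFromCenter (A B C A' B' C' : P) (ab bc ca ab' bc' ca' : L) (O : P) : Prop :=
  (∃ la : L, A ∈ la ∧ A' ∈ la ∧ O ∈ la) ∧
  (∃ lb : L, B ∈ lb ∧ B' ∈ lb ∧ O ∈ lb) ∧
  (∃ lc : L, C ∈ lc ∧ C' ∈ lc ∧ O ∈ lc) ∧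
  O ∉ ab ∧ O ∉ bc ∧ O ∉ ca ∧ O ∉ ab' ∧ O ∉ bc' ∧ O ∉ ca'

/-- Two triangles are perspective from the axis `l` : the intersection points of
corresponding sides lie on `l`, and `l` avoids each of the six vertices. -/
def PerspectiveFromAxis (A B C A' B' C' : P) (ab bc ca ab' bc' ca' : L) (l : L) : Prop :=
  (∃ X : P, X ∈ ab ∧ X ∈ ab' ∧ X ∈ l) ∧
  (∃ Y : P, Y ∈ bc ∧ Y ∈ bc' ∧ Y ∈ l) ∧
  (∃ Z : P, Z ∈ ca ∧ Z ∈ ca' ∧ Z ∈ l) ∧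
  A ∉ l ∧ B ∉ l ∧ C ∉ l ∧ A' ∉ l ∧ B' ∉ l ∧ C' ∉ l

/-- Desargues's property: two distinct triangles that are perspective from a
center are perspective from an axis. -/
def DesarguesProperty : Prop :=
  ∀ (A B C A' B' C' : P) (ab bc ca ab' bc' ca' : L) (O : P),
    IsTriangle P L A B C ab bc ca → IsTriangle P L A' B' C' ab' bc' ca' →
    DistinctTriangles P L A B C A' B' C' ab bc ca ab' bc' ca' →
    PerspectiveFromCenter P L A B C A' B' C' ab bc ca ab' bc' ca' O →
    ∃ l : L, PerspectiveFromAxis P L A B C A' B' C' ab bc ca ab' bc' ca' l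

/-- `D` is the harmonic conjugate `h(A,B;C)` of `C` with respect to the distinct
points `A`, `B` : choosing a line `l` through `C` with `l ≠ AB` and a point `R`
outside both `AB` and `l`, and setting `Pp = BR·l`, `Q = AR·l`, `S = AP·BQ`,
the point `D` is `AB·RS`.  (By the invariance theorem this is independent of
the choices of `l` and `R`.) -/
def IsHarmonic (A B C D : P) : Prop :=
  A ≠ B ∧ ∃ (ab l : L) (R Pp Q S : P),
    A ∈ ab ∧ B ∈ ab ∧ C ∈ ab ∧ C ∈ l ∧ l ≠ ab ∧ R ∉ ab ∧ R ∉ l ∧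
    Pp ∈ l ∧ Col P L B R Pp ∧ Q ∈ l ∧ Col P L A R Q ∧
    Col P L A Pp S ∧ Col P L B Q S ∧ D ∈ ab ∧ Col P L R S D

/-- Fano's axiom: the three diagonal points of any quadrangle (four points, no
three collinear) are noncollinear. -/
def FanoAxiom : Prop :=
  ∀ E₁ E₂ E₃ E₄ X Y Z : P,
    ¬ Col P L E₁ E₂ E₃ → ¬ Col P L E₁ E₂ E₄ → ¬ Col P L E₁ E₃ E₄ → ¬ Col P L E₂ E₃ E₄ →
    Col P L E₁ E₂ X → Col P L E₃ E₄ X →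
    Col P L E₁ E₃ Y → Col P L E₂ E₄ Y →
    Col P L E₁ E₄ Z → Col P L E₂ E₃ Z →
    ¬ Col P L X Y Z

/-- The range of a line `l` : the points incident with `l`. -/
abbrev Rng (l : L) : Type _ := {X : P // X ∈ l}

/-- `f` is the perspectivity from the range of `l` to the range of `m` with
center `O`, a point outside both `l` and `m` : each point `X` of `l` is mapped
to the point `(OX)·m`, i.e. `O`, `X` and `f X` are collinear. -/
def IsPerspectivity (l m : L) (f : Rng P L l → Rng P L m) : Prop :=
  ∃ O : P, O ∉ l ∧ O ∉ m ∧
    ∀ X : Rng P L l, ∃ k : L, O ∈ k ∧ (X : P) ∈ k ∧ ((f X : P)) ∈ k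

/-- A projectivity between ranges of lines : a composite of finitely many
perspectivities. -/
inductive IsProjectivity : (l m : L) → (Rng P L l → Rng P L m) → Prop where
  | persp {l m : L} {f : Rng P L l → Rng P L m} :
      IsPerspectivity P L l m f → IsProjectivity l m f
  | comp {l m n : L} {f : Rng P L l → Rng P L m} {g : Rng P L m → Rng P L n} :
      IsProjectivity l m f → IsProjectivity m n g → IsProjectivity l n (g ∘ f)

/-!
Fix `R ∉ AB` and `Q ∈ AR` with `Q ≠ A, R`. Running the harmonic construction for `X` on the line
`QX` moves `X` by three perspectivities, with centers `Q`, `A`, `R`, to a harmonic conjugate of `X`.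
The crux is that the harmonic conjugate does not depend on the choices made (the invariance
theorem): two constructions in general position are compared by applying the converse of
Desargues's theorem twice and then Desargues's theorem, and eight points per line leave enough room
to pass from any construction to any other through constructions in general position. Hence `υ` is
that composite of perspectivities. The quadrangle `R Pp Q S` that exhibits `D = h(A,B;C)` also
exhibits `C = h(A,B;D)`, so `υ ∘ υ = id`, and Fano's axiom gives `D ≠ C`, so `υ ≠ id`.
-/

open Configuration.HasPoints Configuration.HasLines

section Incidence

variable {P L}

theorem exists_mem_forall_ne {n : ℕ} (hn : LinesHaveAtLeast P L n) (t : L) (bad : List P)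
    (hbad : bad.length < n) : ∃ X : P, X ∈ t ∧ ∀ Y ∈ bad, X ≠ Y := by
  classical
  obtain ⟨s, hs, hst⟩ := hn t
  obtain ⟨X, hXs, hX⟩ := Finset.exists_mem_notMem_of_card_lt_card
    (s := bad.toFinset) (t := s) (by have := bad.toFinset_card_le; omega)
  exact ⟨X, hst X hXs, fun Y hY e => hX (List.mem_toFinset.2 (e ▸ hY))⟩

theorem Col.swap {X Y Z : P} : Col P L X Y Z → Col P L Y X Z :=
  fun ⟨k, hX, hY, hZ⟩ => ⟨k, hY, hX, hZ⟩

variable [ProjectivePlane P L]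

theorem line_eq_of_ne {X Y : P} {k₁ k₂ : L} (h : X ≠ Y) (hX₁ : X ∈ k₁) (hY₁ : Y ∈ k₁)
    (hX₂ : X ∈ k₂) (hY₂ : Y ∈ k₂) : k₁ = k₂ :=
  (Nondegenerate.eq_or_eq hX₁ hY₁ hX₂ hY₂).resolve_left h

theorem point_eq_of_ne {X Y : P} {k₁ k₂ : L} (h : k₁ ≠ k₂) (hX₁ : X ∈ k₁) (hX₂ : X ∈ k₂)
    (hY₁ : Y ∈ k₁) (hY₂ : Y ∈ k₂) : X = Y :=
  (Nondegenerate.eq_or_eq hX₁ hY₁ hX₂ hY₂).resolve_right h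

theorem exists_mem_forall_notMem {n : ℕ} (hn : LinesHaveAtLeast P L n) (t : L) (bad : List L)
    (hne : ∀ k ∈ bad, k ≠ t) (hbad : bad.length < n) : ∃ X : P, X ∈ t ∧ ∀ k ∈ bad, X ∉ k := by
  obtain ⟨X, hXt, hX⟩ := exists_mem_forall_ne hn t (bad.pmap (fun k hk => mkPoint hk) hne)
    (by rwa [List.length_pmap])
  refine ⟨X, hXt, fun k hk hXk => hX _ (List.mem_pmap_of_mem hk) ?_⟩
  exact point_eq_of_ne (hne k hk) hXk hXt (mkPoint_ax _).1 (mkPoint_ax _).2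

/-- Lines through `C` correspond to the points of a line `t ∌ C`, so avoiding `bad` costs one
point of `t` per bad point, and one more for `ab`. -/
theorem exists_line_forall_notMem {n : ℕ} (hn : LinesHaveAtLeast P L n) {C : P} {ab : L}
    (hC : C ∈ ab) (bad : List P) (hCbad : C ∉ bad) (hbad : bad.length + 1 < n) :
    ∃ l : L, C ∈ l ∧ l ≠ ab ∧ ∀ Y ∈ bad, Y ∉ l := by
  obtain ⟨t, hCt⟩ := Nondegenerate.exists_line (L := L) C
  have hYC : ∀ Y ∈ bad, Y ≠ C := fun Y hY e => hCbad (e ▸ hY)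
  obtain ⟨X, hXt, hX⟩ := exists_mem_forall_notMem hn t
    (ab :: bad.pmap (fun Y hY => mkLine hY) hYC)
    (by
      simp only [List.mem_cons, List.mem_pmap]
      rintro k (rfl | ⟨Y, hY, rfl⟩) rfl
      exacts [hCt hC, hCt (mkLine_ax _).2])
    (by rwa [List.length_cons, List.length_pmap])
  have hCX : C ≠ X := fun e => hCt (e ▸ hXt)
  refine ⟨mkLine hCX, (mkLine_ax hCX).1, fun e => hX ab (by simp) (e ▸ (mkLine_ax hCX).2), ?_⟩
  intro Y hY hYl
  refine hX _ (List.mem_cons_of_mem _ (List.mem_pmap_of_mem hY)) ?_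
  rw [line_eq_of_ne (hYC Y hY) (mkLine_ax _).1 (mkLine_ax _).2 hYl (mkLine_ax hCX).1]
  exact (mkLine_ax hCX).2

end Incidence

section Perspectivity

variable {P L} [ProjectivePlane P L] {l m : L} {O : P}

def perspectivity (hOl : O ∉ l) (hOm : O ∉ m) : Rng P L l → Rng P L m := fun X =>
  have hOX : O ≠ X := fun e => hOl (e ▸ X.2)
  ⟨mkPoint (show mkLine hOX ≠ m from fun e => hOm (e ▸ (mkLine_ax hOX).1)), (mkPoint_ax _).2⟩

theorem perspectivity_spec (hOl : O ∉ l) (hOm : O ∉ m) (X : Rng P L l) :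
    ∃ k : L, O ∈ k ∧ (X : P) ∈ k ∧ (perspectivity hOl hOm X : P) ∈ k :=
  ⟨_, (mkLine_ax _).1, (mkLine_ax _).2, (mkPoint_ax _).1⟩

theorem isPerspectivity_perspectivity (hOl : O ∉ l) (hOm : O ∉ m) :
    IsPerspectivity P L l m (perspectivity hOl hOm) :=
  ⟨O, hOl, hOm, perspectivity_spec hOl hOm⟩

theorem perspectivity_eq (hOl : O ∉ l) (hOm : O ∉ m) (X : Rng P L l) {Y : P} {k : L}
    (hOk : O ∈ k) (hXk : (X : P) ∈ k) (hYk : Y ∈ k) (hYm : Y ∈ m) :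
    (perspectivity hOl hOm X : P) = Y := by
  obtain ⟨k₀, hOk₀, hXk₀, hk₀⟩ := perspectivity_spec hOl hOm X
  have hOX : O ≠ X := fun e => hOl (e ▸ X.2)
  obtain rfl := line_eq_of_ne hOX hOk hXk hOk₀ hXk₀
  exact point_eq_of_ne (show k ≠ m from fun e => hOm (e ▸ hOk)) hk₀ (perspectivity hOl hOm X).2
    hYk hYm

end Perspectivity

section HarmonicConfig

variable {P L}

/-- The data of `IsHarmonic P L A B C D` with every line named: the quadrangle `R Pp Q S`
has sides `l = PpQ ∋ C`, `r = RPp ∋ B`, `m = RQ ∋ A`, `p = PpS ∋ A`, `q = QS ∋ B`,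
`n = RS ∋ D`. -/
structure HarmonicConfig (A B C D : P) (ab l r m p q n : L) (R Pp Q S : P) : Prop where
  hA : A ∈ ab
  hB : B ∈ ab
  hC : C ∈ ab
  hD : D ∈ ab
  hAB : A ≠ B
  hCA : C ≠ A
  hCB : C ≠ B
  hCl : C ∈ l
  hlab : l ≠ ab
  hRab : R ∉ ab
  hRl : R ∉ l
  hPl : Pp ∈ l
  hPr : Pp ∈ r
  hBr : B ∈ r
  hRr : R ∈ r
  hQl : Q ∈ l
  hQm : Q ∈ m
  hAm : A ∈ m
  hRm : R ∈ m
  hSp : S ∈ p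
  hAp : A ∈ p
  hPp : Pp ∈ p
  hSq : S ∈ q
  hBq : B ∈ q
  hQq : Q ∈ q
  hDn : D ∈ n
  hRn : R ∈ n
  hSn : S ∈ n

namespace HarmonicConfig

variable {A B C D R Pp Q S : P} {ab l r m p q n : L}
  (H : HarmonicConfig A B C D ab l r m p q n R Pp Q S)
include H

theorem R_ne_A : R ≠ A := fun h => H.hRab (h ▸ H.hA)
theorem R_ne_B : R ≠ B := fun h => H.hRab (h ▸ H.hB)
theorem R_ne_C : R ≠ C := fun h => H.hRab (h ▸ H.hC)
theorem r_ne_l : r ≠ l := fun h => H.hRl (h ▸ H.hRr)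
theorem m_ne_l : m ≠ l := fun h => H.hRl (h ▸ H.hRm)
theorem r_ne_ab : r ≠ ab := fun h => H.hRab (h ▸ H.hRr)
theorem m_ne_ab : m ≠ ab := fun h => H.hRab (h ▸ H.hRm)
theorem n_ne_ab : n ≠ ab := fun h => H.hRab (h ▸ H.hRn)
theorem Pp_ne_R : Pp ≠ R := fun h => H.hRl (h ▸ H.hPl)
theorem Q_ne_R : Q ≠ R := fun h => H.hRl (h ▸ H.hQl)

theorem isHarmonic : IsHarmonic P L A B C D :=
  ⟨H.hAB, ab, l, R, Pp, Q, S, H.hA, H.hB, H.hC, H.hCl, H.hlab, H.hRab, H.hRl,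
    H.hPl, ⟨r, H.hBr, H.hRr, H.hPr⟩, H.hQl, ⟨m, H.hAm, H.hRm, H.hQm⟩,
    ⟨p, H.hAp, H.hPp, H.hSp⟩, ⟨q, H.hBq, H.hQq, H.hSq⟩, H.hD, ⟨n, H.hRn, H.hSn, H.hDn⟩⟩

end HarmonicConfig

theorem HarmonicConfig.exists_of_isHarmonic {A B C D : P} (h : IsHarmonic P L A B C D)
    (hCA : C ≠ A) (hCB : C ≠ B) :
    ∃ (ab l r m p q n : L) (R Pp Q S : P), HarmonicConfig A B C D ab l r m p q n R Pp Q S := by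
  obtain ⟨hAB, ab, l, R, Pp, Q, S, hA, hB, hC, hCl, hlab, hRab, hRl, hPl, ⟨r, hBr, hRr, hPr⟩,
    hQl, ⟨m, hAm, hRm, hQm⟩, ⟨p, hAp, hPp, hSp⟩, ⟨q, hBq, hQq, hSq⟩, hD, ⟨n, hRn, hSn, hDn⟩⟩ := h
  exact ⟨ab, l, r, m, p, q, n, R, Pp, Q, S, hA, hB, hC, hD, hAB, hCA, hCB, hCl, hlab, hRab, hRl,
    hPl, hPr, hBr, hRr, hQl, hQm, hAm, hRm, hSp, hAp, hPp, hSq, hBq, hQq, hDn, hRn, hSn⟩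

variable [ProjectivePlane P L]

namespace HarmonicConfig

variable {A B C D R Pp Q S : P} {ab l r m p q n : L}
  (H : HarmonicConfig A B C D ab l r m p q n R Pp Q S)
include H

theorem A_notMem_l : A ∉ l := fun h => H.hlab (line_eq_of_ne H.hCA.symm h H.hCl H.hA H.hC)
theorem B_notMem_l : B ∉ l := fun h => H.hlab (line_eq_of_ne H.hCB.symm h H.hCl H.hB H.hC)
theorem A_notMem_r : A ∉ r := fun h => H.hRab (line_eq_of_ne H.hAB h H.hBr H.hA H.hB ▸ H.hRr)
theorem B_notMem_m : B ∉ m := fun h => H.hRab (line_eq_of_ne H.hAB H.hAm h H.hA H.hB ▸ H.hRm)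
theorem r_ne_m : r ≠ m := fun h => H.A_notMem_r (h ▸ H.hAm)
theorem Pp_ne_A : Pp ≠ A := fun h => H.A_notMem_r (h ▸ H.hPr)
theorem Pp_ne_B : Pp ≠ B := fun h => H.B_notMem_l (h ▸ H.hPl)
theorem Q_ne_A : Q ≠ A := fun h => H.A_notMem_l (h ▸ H.hQl)
theorem Q_ne_B : Q ≠ B := fun h => H.B_notMem_m (h ▸ H.hQm)
theorem Pp_notMem_ab : Pp ∉ ab := fun h => H.Pp_ne_B (point_eq_of_ne H.r_ne_ab H.hPr h H.hBr H.hB)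
theorem Q_notMem_ab : Q ∉ ab := fun h => H.Q_ne_A (point_eq_of_ne H.m_ne_ab H.hQm h H.hAm H.hA)
theorem Pp_ne_C : Pp ≠ C := fun h => H.Pp_notMem_ab (h ▸ H.hC)
theorem Q_ne_C : Q ≠ C := fun h => H.Q_notMem_ab (h ▸ H.hC)
theorem Pp_ne_Q : Pp ≠ Q := fun h =>
  H.hRl (point_eq_of_ne H.r_ne_m H.hPr (h ▸ H.hQm) H.hRr H.hRm ▸ H.hPl)
theorem Pp_notMem_m : Pp ∉ m := fun h => H.Pp_ne_Q (point_eq_of_ne H.m_ne_l h H.hPl H.hQm H.hQl)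
theorem Q_notMem_r : Q ∉ r := fun h => H.Pp_ne_Q (point_eq_of_ne H.r_ne_l H.hPr H.hPl h H.hQl)
theorem p_ne_l : p ≠ l := fun h => H.A_notMem_l (h ▸ H.hAp)
theorem p_ne_ab : p ≠ ab := fun h => H.Pp_notMem_ab (h ▸ H.hPp)
theorem B_notMem_p : B ∉ p := fun h =>
  H.Pp_notMem_ab (line_eq_of_ne H.hAB H.hAp h H.hA H.hB ▸ H.hPp)
theorem A_notMem_q : A ∉ q := fun h =>
  H.Q_notMem_ab (line_eq_of_ne H.hAB h H.hBq H.hA H.hB ▸ H.hQq)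
theorem q_ne_ab : q ≠ ab := fun h => H.Q_notMem_ab (h ▸ H.hQq)
theorem q_ne_l : q ≠ l := fun h => H.B_notMem_l (h ▸ H.hBq)
theorem p_ne_r : p ≠ r := fun h => H.A_notMem_r (h ▸ H.hAp)
theorem p_ne_m : p ≠ m := fun h => H.Pp_notMem_m (h ▸ H.hPp)
theorem q_ne_m : q ≠ m := fun h => H.B_notMem_m (h ▸ H.hBq)
theorem q_ne_r : q ≠ r := fun h => H.Q_notMem_r (h ▸ H.hQq)
theorem Q_notMem_p : Q ∉ p := fun h => H.Pp_ne_Q (point_eq_of_ne H.p_ne_l H.hPp H.hPl h H.hQl)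
theorem Pp_notMem_q : Pp ∉ q := fun h => H.Pp_ne_Q (point_eq_of_ne H.q_ne_l h H.hPl H.hQq H.hQl)
theorem C_notMem_p : C ∉ p := fun h => H.p_ne_ab (line_eq_of_ne H.hCA.symm H.hAp h H.hA H.hC)
theorem C_notMem_q : C ∉ q := fun h => H.q_ne_ab (line_eq_of_ne H.hCB.symm H.hBq h H.hB H.hC)
theorem S_ne_A : S ≠ A := fun h => H.A_notMem_q (h ▸ H.hSq)
theorem S_ne_B : S ≠ B := fun h => H.B_notMem_p (h ▸ H.hSp)
theorem S_ne_Pp : S ≠ Pp := fun h => H.Pp_notMem_q (h ▸ H.hSq)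
theorem S_ne_Q : S ≠ Q := fun h => H.Q_notMem_p (h ▸ H.hSp)
theorem S_notMem_l : S ∉ l := fun h => H.S_ne_Pp (point_eq_of_ne H.p_ne_l H.hSp h H.hPp H.hPl)
theorem S_notMem_ab : S ∉ ab := fun h => H.S_ne_A (point_eq_of_ne H.p_ne_ab H.hSp h H.hAp H.hA)
theorem R_notMem_p : R ∉ p := fun h =>
  H.Pp_notMem_m (line_eq_of_ne H.R_ne_A h H.hAp H.hRm H.hAm ▸ H.hPp)
theorem R_notMem_q : R ∉ q := fun h => H.q_ne_r (line_eq_of_ne H.R_ne_B h H.hBq H.hRr H.hBr)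
theorem S_ne_R : S ≠ R := fun h => H.R_notMem_p (h ▸ H.hSp)
theorem S_notMem_m : S ∉ m := fun h => H.S_ne_A (point_eq_of_ne H.p_ne_m H.hSp h H.hAp H.hAm)
theorem S_notMem_r : S ∉ r := fun h => H.S_ne_B (point_eq_of_ne H.q_ne_r H.hSq h H.hBq H.hBr)
theorem n_ne_p : n ≠ p := fun h => H.R_notMem_p (h ▸ H.hRn)
theorem n_ne_q : n ≠ q := fun h => H.R_notMem_q (h ▸ H.hRn)
theorem n_ne_m : n ≠ m := fun h => H.S_notMem_m (h ▸ H.hSn)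
theorem n_ne_r : n ≠ r := fun h => H.S_notMem_r (h ▸ H.hSn)
theorem Pp_notMem_n : Pp ∉ n := fun h => H.S_ne_Pp (point_eq_of_ne H.n_ne_p H.hSn H.hSp h H.hPp)
theorem Q_notMem_n : Q ∉ n := fun h => H.S_ne_Q (point_eq_of_ne H.n_ne_q H.hSn H.hSq h H.hQq)
theorem A_notMem_n : A ∉ n := fun h => H.n_ne_m (line_eq_of_ne H.R_ne_A H.hRn h H.hRm H.hAm)
theorem B_notMem_n : B ∉ n := fun h => H.n_ne_r (line_eq_of_ne H.R_ne_B H.hRn h H.hRr H.hBr)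
theorem D_ne_A : D ≠ A := fun h => H.A_notMem_n (h ▸ H.hDn)
theorem D_ne_B : D ≠ B := fun h => H.B_notMem_n (h ▸ H.hDn)

theorem isTriangle_PpQS : IsTriangle P L Pp Q S l q p :=
  ⟨H.hPl, H.hQl, H.hQq, H.hSq, H.hSp, H.hPp, H.Pp_notMem_q, H.Q_notMem_p, H.S_notMem_l⟩

theorem isTriangle_PpQR : IsTriangle P L Pp Q R l m r :=
  ⟨H.hPl, H.hQl, H.hQm, H.hRm, H.hRr, H.hPr, H.Pp_notMem_m, H.Q_notMem_r, H.hRl⟩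

theorem isTriangle_QRS : IsTriangle P L Q R S m n q :=
  ⟨H.hQm, H.hRm, H.hRn, H.hSn, H.hSq, H.hQq, H.Q_notMem_n, H.R_notMem_q, H.S_notMem_m⟩

/-- If `D = C`, then `A`, `B`, `C` would be the three diagonal points of the quadrangle
`Pp S R Q`. -/
theorem D_ne_C (hfano : FanoAxiom P L) : D ≠ C := by
  intro h
  refine hfano Pp S R Q A B C ?_ ?_ ?_ ?_ ⟨p, H.hPp, H.hSp, H.hAp⟩ ⟨m, H.hRm, H.hQm, H.hAm⟩
    ⟨r, H.hPr, H.hRr, H.hBr⟩ ⟨q, H.hSq, H.hQq, H.hBq⟩ ⟨l, H.hPl, H.hQl, H.hCl⟩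
    ⟨n, H.hSn, H.hRn, h ▸ H.hDn⟩ ⟨ab, H.hA, H.hB, H.hC⟩
  · rintro ⟨k, hP, hS, hR⟩
    exact H.R_notMem_p (line_eq_of_ne H.S_ne_Pp.symm hP hS H.hPp H.hSp ▸ hR)
  · rintro ⟨k, hP, hS, hQ⟩
    exact H.Q_notMem_p (line_eq_of_ne H.S_ne_Pp.symm hP hS H.hPp H.hSp ▸ hQ)
  · rintro ⟨k, hP, hR, hQ⟩
    exact H.Q_notMem_r (line_eq_of_ne H.Pp_ne_R hP hR H.hPr H.hRr ▸ hQ)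
  · rintro ⟨k, hS, hR, hQ⟩
    exact H.Q_notMem_n (line_eq_of_ne H.S_ne_R.symm hR hS H.hRn H.hSn ▸ hQ)

/-- The same quadrangle, read with `Pp` in the role of `R` and `S` in the role of `Q`. -/
theorem symm : HarmonicConfig A B D C ab n r p m q l Pp R S Q :=
  ⟨H.hA, H.hB, H.hD, H.hC, H.hAB, H.D_ne_A, H.D_ne_B, H.hDn, H.n_ne_ab, H.Pp_notMem_ab,
    H.Pp_notMem_n, H.hRn, H.hRr, H.hBr, H.hPr, H.hSn, H.hSp, H.hAp, H.hPp, H.hQm, H.hAm, H.hRm,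
    H.hQq, H.hBq, H.hSq, H.hCl, H.hPl, H.hQl⟩

end HarmonicConfig

theorem HarmonicConfig.exists_of_line {A B C R : P} {ab l r m : L} (hA : A ∈ ab) (hB : B ∈ ab)
    (hC : C ∈ ab) (hAB : A ≠ B) (hCA : C ≠ A) (hCB : C ≠ B) (hCl : C ∈ l) (hlab : l ≠ ab)
    (hRab : R ∉ ab) (hRl : R ∉ l) (hBr : B ∈ r) (hRr : R ∈ r) (hAm : A ∈ m) (hRm : R ∈ m) :
    ∃ (p q n : L) (Pp Q S D : P), HarmonicConfig A B C D ab l r m p q n R Pp Q S := by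
  have hrl : r ≠ l := fun e => hRl (e ▸ hRr)
  have hml : m ≠ l := fun e => hRl (e ▸ hRm)
  have hAr : A ∉ r := fun e => hRab (line_eq_of_ne hAB e hBr hA hB ▸ hRr)
  have hBm : B ∉ m := fun e => hRab (line_eq_of_ne hAB hAm e hA hB ▸ hRm)
  obtain ⟨Pp, hPr, hPl⟩ : ∃ X : P, X ∈ r ∧ X ∈ l := ⟨_, mkPoint_ax hrl⟩
  obtain ⟨Q, hQm, hQl⟩ : ∃ X : P, X ∈ m ∧ X ∈ l := ⟨_, mkPoint_ax hml⟩
  have hPA : Pp ≠ A := fun e => hAr (e ▸ hPr)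
  have hQB : Q ≠ B := fun e => hBm (e ▸ hQm)
  obtain ⟨p, hAp, hPp⟩ : ∃ k : L, A ∈ k ∧ Pp ∈ k := ⟨_, mkLine_ax hPA.symm⟩
  obtain ⟨q, hBq, hQq⟩ : ∃ k : L, B ∈ k ∧ Q ∈ k := ⟨_, mkLine_ax hQB.symm⟩
  have hpq : p ≠ q := by
    rintro rfl
    have hPC : Pp = C := point_eq_of_ne hlab hPl (line_eq_of_ne hAB hAp hBq hA hB ▸ hPp) hCl hC
    exact hRab (line_eq_of_ne hCB (hPC ▸ hPr) hBr hC hB ▸ hRr)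
  obtain ⟨S, hSp, hSq⟩ : ∃ X : P, X ∈ p ∧ X ∈ q := ⟨_, mkPoint_ax hpq⟩
  have hPQ : Pp ≠ Q := fun e =>
    hRl (point_eq_of_ne (show r ≠ m from fun e' => hAr (e' ▸ hAm)) hPr (e ▸ hQm) hRr hRm ▸ hPl)
  have hPm : Pp ∉ m := fun e => hPQ (point_eq_of_ne hml e hPl hQm hQl)
  have hSR : S ≠ R := fun e =>
    hPm (line_eq_of_ne (show R ≠ A from fun e' => hRab (e' ▸ hA)) (e ▸ hSp) hAp hRm hAm ▸ hPp)
  obtain ⟨n, hRn, hSn⟩ : ∃ k : L, R ∈ k ∧ S ∈ k := ⟨_, mkLine_ax hSR.symm⟩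
  obtain ⟨D, hDn, hD⟩ : ∃ X : P, X ∈ n ∧ X ∈ ab :=
    ⟨_, mkPoint_ax (show n ≠ ab from fun e => hRab (e ▸ hRn))⟩
  exact ⟨p, q, n, Pp, Q, S, D, hA, hB, hC, hD, hAB, hCA, hCB, hCl, hlab, hRab, hRl, hPl, hPr,
    hBr, hRr, hQl, hQm, hAm, hRm, hSp, hAp, hPp, hSq, hBq, hQq, hDn, hRn, hSn⟩

namespace IsHarmonic

variable {A B C D : P}

theorem eq_left (h : IsHarmonic P L A B A D) : D = A := by
  obtain ⟨hAB, ab, l, R, Pp, Q, S, hA, hB, -, hAl, hlab, hRab, hRl, hPl, ⟨r, hBr, hRr, hPr⟩,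
    hQl, ⟨m, hAm, hRm, hQm⟩, ⟨p, hAp, hPp, hSp⟩, ⟨q, hBq, hQq, hSq⟩, hD, ⟨n, hRn, hSn, hDn⟩⟩ := h
  obtain rfl : A = Q := point_eq_of_ne (show m ≠ l from fun e => hRl (e ▸ hRm)) hAm hAl hQm hQl
  have hAr : A ∉ r := fun e => hRab (line_eq_of_ne hAB e hBr hA hB ▸ hRr)
  obtain rfl : l = p := line_eq_of_ne (show A ≠ Pp from fun e => hAr (e ▸ hPr)) hAl hPl hAp hPp
  obtain rfl : ab = q := line_eq_of_ne hAB hA hB hQq hBq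
  obtain rfl : A = S := point_eq_of_ne hlab hAl hA hSp hSq
  obtain rfl : m = n := line_eq_of_ne (show R ≠ A from fun e => hRab (e ▸ hA)) hRm hAm hRn hSn
  exact point_eq_of_ne (show m ≠ ab from fun e => hRab (e ▸ hRm)) hDn hD hSn hA

theorem eq_right (h : IsHarmonic P L A B B D) : D = B := by
  obtain ⟨hAB, ab, l, R, Pp, Q, S, hA, hB, -, hBl, hlab, hRab, hRl, hPl, ⟨r, hBr, hRr, hPr⟩,
    hQl, ⟨m, hAm, hRm, hQm⟩, ⟨p, hAp, hPp, hSp⟩, ⟨q, hBq, hQq, hSq⟩, hD, ⟨n, hRn, hSn, hDn⟩⟩ := h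
  obtain rfl : B = Pp := point_eq_of_ne (show r ≠ l from fun e => hRl (e ▸ hRr)) hBr hBl hPr hPl
  have hBm : B ∉ m := fun e => hRab (line_eq_of_ne hAB hAm e hA hB ▸ hRm)
  obtain rfl : ab = p := line_eq_of_ne hAB hA hB hAp hPp
  obtain rfl : l = q := line_eq_of_ne (show B ≠ Q from fun e => hBm (e ▸ hQm)) hBl hQl hBq hQq
  obtain rfl : B = S := point_eq_of_ne hlab.symm hB hBl hSp hSq
  obtain rfl : r = n := line_eq_of_ne (show R ≠ B from fun e => hRab (e ▸ hB)) hRr hBr hRn hSn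
  exact point_eq_of_ne (show r ≠ ab from fun e => hRab (e ▸ hRr)) hDn hD hSn hB

theorem symm (h : IsHarmonic P L A B C D) : IsHarmonic P L A B D C := by
  by_cases hCA : C = A
  · subst hCA
    obtain rfl := h.eq_left
    exact h
  by_cases hCB : C = B
  · subst hCB
    obtain rfl := h.eq_right
    exact h
  obtain ⟨ab, l, r, m, p, q, n, R, Pp, Q, S, H⟩ := HarmonicConfig.exists_of_isHarmonic h hCA hCB
  exact H.symm.isHarmonic

theorem ne (hfano : FanoAxiom P L) (h : IsHarmonic P L A B C D) (hCA : C ≠ A) (hCB : C ≠ B) :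
    D ≠ C := by
  obtain ⟨ab, l, r, m, p, q, n, R, Pp, Q, S, H⟩ := HarmonicConfig.exists_of_isHarmonic h hCA hCB
  exact H.D_ne_C hfano

end IsHarmonic

end HarmonicConfig

section Uniqueness

variable {P L} [ProjectivePlane P L]

/-- Desargues for `A A' Y` and `B B' X`, where `X = bc·bc'`, `Y = ca·ca'`: they are perspective
from `Z = ab·ab'`, and their axis passes through `C`, `C'` and the point `AA'·BB'`. -/
theorem exists_center_of_perspectiveFromAxis (hdes : DesarguesProperty P L)
    {A B C A' B' C' : P} {ab bc ca ab' bc' ca' g : L}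
    (T : IsTriangle P L A B C ab bc ca) (T' : IsTriangle P L A' B' C' ab' bc' ca')
    (hdist : DistinctTriangles P L A B C A' B' C' ab bc ca ab' bc' ca')
    (hax : PerspectiveFromAxis P L A B C A' B' C' ab bc ca ab' bc' ca' g)
    (hAca' : A ∉ ca') (hA'ca : A' ∉ ca) (hBbc' : B ∉ bc') (hB'bc : B' ∉ bc)
    (hA'ab : A' ∉ ab) (hB'ab : B' ∉ ab) :
    ∃ O : P, (∀ k : L, A ∈ k → A' ∈ k → O ∈ k) ∧ (∀ k : L, B ∈ k → B' ∈ k → O ∈ k) ∧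
      Col P L C C' O ∧ O ∉ bc ∧ O ∉ bc' := by
  obtain ⟨hAab, hBab, hBbc, hCbc, hCca, hAca, hAbc, hBca, -⟩ := T
  obtain ⟨hA'ab', hB'ab', hB'bc', hC'bc', hC'ca', hA'ca', hA'bc', hB'ca', -⟩ := T'
  obtain ⟨hAA', hBB', hCC', -, -, -⟩ := hdist
  obtain ⟨⟨Z, hZab, hZab', hZg⟩, ⟨X, hXbc, hXbc', hXg⟩, ⟨Y, hYca, hYca', hYg⟩,
    hAg, hBg, -, hA'g, hB'g, -⟩ := hax
  obtain ⟨kA, hAkA, hA'kA⟩ : ∃ k : L, A ∈ k ∧ A' ∈ k := ⟨_, mkLine_ax hAA'⟩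
  obtain ⟨kB, hBkB, hB'kB⟩ : ∃ k : L, B ∈ k ∧ B' ∈ k := ⟨_, mkLine_ax hBB'⟩
  have hAB : A ≠ B := fun h => hAbc (h ▸ hBbc)
  have hcabc : ca ≠ bc := fun h => hBca (h ▸ hBbc)
  have hcabc' : ca' ≠ bc' := fun h => hB'ca' (h ▸ hB'bc')
  have hkBbc : kB ≠ bc := fun h => hB'bc (h ▸ hB'kB)
  have hkBbc' : kB ≠ bc' := fun h => hBbc' (h ▸ hBkB)
  have hZ : ∀ {V : P} {k k' : L}, V ∉ g → V ∈ k → V ∈ k' → Z ∈ k' → k ≠ k' → Z ∉ k :=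
    fun hVg hVk hVk' hZk' hkk' hZk => hVg (point_eq_of_ne hkk' hZk hZk' hVk hVk' ▸ hZg)
  have hTA : IsTriangle P L A A' Y kA ca' ca :=
    ⟨hAkA, hA'kA, hA'ca', hYca', hYca, hAca, hAca', hA'ca, fun hY => hA'ca
      (line_eq_of_ne (show A ≠ Y from fun e => hAg (e ▸ hYg)) hAkA hY hAca hYca ▸ hA'kA)⟩
  have hTB : IsTriangle P L B B' X kB bc' bc :=
    ⟨hBkB, hB'kB, hB'bc', hXbc', hXbc, hBbc, hBbc', hB'bc, fun hX => hB'bc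
      (line_eq_of_ne (show B ≠ X from fun e => hBg (e ▸ hXg)) hBkB hX hBbc hXbc ▸ hB'kB)⟩
  have hZcenter : PerspectiveFromCenter P L A A' Y B B' X kA ca' ca kB bc' bc Z :=
    ⟨⟨ab, hAab, hBab, hZab⟩, ⟨ab', hA'ab', hB'ab', hZab'⟩, ⟨g, hYg, hXg, hZg⟩,
      hZ hAg hAkA hAab hZab fun h => hA'ab (h ▸ hA'kA),
      hZ hA'g hA'ca' hA'ab' hZab' fun h => hB'ca' (h ▸ hB'ab'),
      hZ hAg hAca hAab hZab fun h => hBca (h ▸ hBab),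
      hZ hBg hBkB hBab hZab fun h => hB'ab (h ▸ hB'kB),
      hZ hB'g hB'bc' hB'ab' hZab' fun h => hA'bc' (h ▸ hA'ab'),
      hZ hBg hBbc hBab hZab fun h => hAbc (h ▸ hAab)⟩
  obtain ⟨h, ⟨O, hOkA, hOkB, hOh⟩, ⟨Y₁, hY₁ca', hY₁bc', hY₁h⟩, ⟨Z₁, hZ₁ca, hZ₁bc, hZ₁h⟩,
      -, -, -, hBh, hB'h, -⟩ :=
    hdes A A' Y B B' X kA ca' ca kB bc' bc Z hTA hTB
      ⟨hAB, fun h => hA'bc' (h ▸ hB'bc'),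
        fun h => hCC' ((point_eq_of_ne hcabc hYca (h ▸ hXbc) hCca hCbc).symm.trans
          (point_eq_of_ne hcabc' hYca' (h ▸ hXbc') hC'ca' hC'bc')),
        fun h => hA'ab (line_eq_of_ne hAB hAkA (h ▸ hBkB) hAab hBab ▸ hA'kA), hcabc', hcabc⟩
      hZcenter
  refine ⟨O, fun k hA hA' => line_eq_of_ne hAA' hAkA hA'kA hA hA' ▸ hOkA,
    fun k hB hB' => line_eq_of_ne hBB' hBkB hB'kB hB hB' ▸ hOkB,
    ⟨h, point_eq_of_ne hcabc hZ₁ca hZ₁bc hCca hCbc ▸ hZ₁h,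
      point_eq_of_ne hcabc' hY₁ca' hY₁bc' hC'ca' hC'bc' ▸ hY₁h, hOh⟩,
    fun hO => hBh (point_eq_of_ne hkBbc hOkB hO hBkB hBbc ▸ hOh),
    fun hO => hB'h (point_eq_of_ne hkBbc' hOkB hO hB'kB hB'bc' ▸ hOh)⟩

namespace HarmonicConfig

variable {A B C D D' R R' Pp Pp' Q Q' S S' : P} {ab l l' r r' m m' p p' q q' n n' : L}

/-- The triangles `Pp Q S` and `Pp' Q' S'` are perspective from the axis `ab`; their center lies
on `PpPp' = r` and `QQ' = m`, so it is `R`, and `S'` lies on `RS = n`. -/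
theorem eq_of_same_R (hdes : DesarguesProperty P L)
    (H : HarmonicConfig A B C D ab l r m p q n R Pp Q S)
    (H' : HarmonicConfig A B C D' ab l' r' m' p' q' n' R Pp' Q' S')
    (hPl' : Pp ∉ l') (hQl' : Q ∉ l') : D = D' := by
  obtain rfl : r = r' := line_eq_of_ne H.R_ne_B H.hRr H.hBr H'.hRr H'.hBr
  obtain rfl : m = m' := line_eq_of_ne H.R_ne_A H.hRm H.hAm H'.hRm H'.hAm
  have hPP' : Pp ≠ Pp' := fun e => hPl' (e ▸ H'.hPl)
  have hQQ' : Q ≠ Q' := fun e => hQl' (e ▸ H'.hQl)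
  have hpp' : p ≠ p' := fun e =>
    hPP' (point_eq_of_ne H.p_ne_r H.hPp H.hPr (e ▸ H'.hPp) H'.hPr)
  have hqq' : q ≠ q' := fun e =>
    hQQ' (point_eq_of_ne H.q_ne_m H.hQq H.hQm (e ▸ H'.hQq) H'.hQm)
  obtain ⟨O, hOr, hOm, ⟨k, hSk, hS'k, hOk⟩, -, -⟩ := exists_center_of_perspectiveFromAxis hdes
    H.isTriangle_PpQS H'.isTriangle_PpQS
    ⟨hPP', hQQ', fun e => H.S_ne_A (point_eq_of_ne hpp' H.hSp (e ▸ H'.hSp) H.hAp H'.hAp),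
      fun e => hPl' (e ▸ H.hPl), hqq', hpp'⟩
    ⟨⟨C, H.hCl, H'.hCl, H.hC⟩, ⟨B, H.hBq, H'.hBq, H.hB⟩, ⟨A, H.hAp, H'.hAp, H.hA⟩,
      H.Pp_notMem_ab, H.Q_notMem_ab, H.S_notMem_ab, H'.Pp_notMem_ab, H'.Q_notMem_ab,
      H'.S_notMem_ab⟩
    (fun h => hpp' (line_eq_of_ne H.Pp_ne_A H.hPp H.hAp h H'.hAp))
    (fun h => hPP' (point_eq_of_ne H.p_ne_r H.hPp H.hPr h H'.hPr))
    (fun h => hqq' (line_eq_of_ne H.Q_ne_B H.hQq H.hBq h H'.hBq))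
    (fun h => hQQ' (point_eq_of_ne H.q_ne_m H.hQq H.hQm h H'.hQm))
    (fun h => hPP' (point_eq_of_ne H.r_ne_l H.hPr H.hPl H'.hPr h))
    (fun h => hQQ' (point_eq_of_ne H.m_ne_l H.hQm H.hQl H'.hQm h))
  obtain rfl : O = R :=
    point_eq_of_ne H.r_ne_m (hOr r H.hPr H'.hPr) (hOm m H.hQm H'.hQm) H.hRr H.hRm
  obtain rfl : k = n := line_eq_of_ne H.S_ne_R hSk hOk H.hSn H.hRn
  obtain rfl : k = n' := line_eq_of_ne H'.S_ne_R hS'k hOk H'.hSn H'.hRn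
  exact point_eq_of_ne H.n_ne_ab H.hDn H.hD H'.hDn H'.hD

/-- Converse Desargues, for `Pp Q S`, `Pp' Q' S'` and for `Pp Q R`, `Pp' Q' R'` (both with axis
`ab`), gives two centers, and both are the point `PpPp'·QQ'`. -/
theorem exists_center (hdes : DesarguesProperty P L)
    (H : HarmonicConfig A B C D ab l r m p q n R Pp Q S)
    (H' : HarmonicConfig A B C D' ab l' r' m' p' q' n' R' Pp' Q' S')
    (hP'l : Pp' ∉ l) (hQ'l : Q' ∉ l) (hPl' : Pp ∉ l') (hP'p : Pp' ∉ p) (hQ'q : Q' ∉ q)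
    (hP'r : Pp' ∉ r) (hQ'm : Q' ∉ m) :
    ∃ O : P, Col P L Q Q' O ∧ Col P L R R' O ∧ Col P L S S' O ∧
      O ∉ q ∧ O ∉ q' ∧ O ∉ m ∧ O ∉ m' := by
  have hPP' : Pp ≠ Pp' := fun e => hP'l (e ▸ H.hPl)
  have hQQ' : Q ≠ Q' := fun e => hQ'l (e ▸ H.hQl)
  have hll' : l ≠ l' := fun e => hPl' (e ▸ H.hPl)
  have hpp' : p ≠ p' := fun e => hP'p (e ▸ H'.hPp)
  have hqq' : q ≠ q' := fun e => hQ'q (e ▸ H'.hQq)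
  have hrr' : r ≠ r' := fun e => hP'r (e ▸ H'.hPr)
  have hmm' : m ≠ m' := fun e => hQ'm (e ▸ H'.hQm)
  have hRR' : R ≠ R' := fun e => hrr' (line_eq_of_ne H.R_ne_B H.hRr H.hBr (e ▸ H'.hRr) H'.hBr)
  have hSS' : S ≠ S' := fun e => H.S_ne_A (point_eq_of_ne hpp' H.hSp (e ▸ H'.hSp) H.hAp H'.hAp)
  obtain ⟨O, hOP, hOQ, hS, hOq, hOq'⟩ := exists_center_of_perspectiveFromAxis hdes
    H.isTriangle_PpQS H'.isTriangle_PpQS ⟨hPP', hQQ', hSS', hll', hqq', hpp'⟩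
    ⟨⟨C, H.hCl, H'.hCl, H.hC⟩, ⟨B, H.hBq, H'.hBq, H.hB⟩, ⟨A, H.hAp, H'.hAp, H.hA⟩,
      H.Pp_notMem_ab, H.Q_notMem_ab, H.S_notMem_ab, H'.Pp_notMem_ab, H'.Q_notMem_ab,
      H'.S_notMem_ab⟩
    (fun h => hpp' (line_eq_of_ne H.Pp_ne_A H.hPp H.hAp h H'.hAp)) hP'p
    (fun h => hqq' (line_eq_of_ne H.Q_ne_B H.hQq H.hBq h H'.hBq)) hQ'q hP'l hQ'l
  obtain ⟨O₂, hO₂P, hO₂Q, hR, hO₂m, hO₂m'⟩ := exists_center_of_perspectiveFromAxis hdes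
    H.isTriangle_PpQR H'.isTriangle_PpQR ⟨hPP', hQQ', hRR', hll', hmm', hrr'⟩
    ⟨⟨C, H.hCl, H'.hCl, H.hC⟩, ⟨A, H.hAm, H'.hAm, H.hA⟩, ⟨B, H.hBr, H'.hBr, H.hB⟩,
      H.Pp_notMem_ab, H.Q_notMem_ab, H.hRab, H'.Pp_notMem_ab, H'.Q_notMem_ab, H'.hRab⟩
    (fun h => hrr' (line_eq_of_ne H.Pp_ne_B H.hPr H.hBr h H'.hBr)) hP'r
    (fun h => hmm' (line_eq_of_ne H.Q_ne_A H.hQm H.hAm h H'.hAm)) hQ'm hP'l hQ'l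
  obtain ⟨kP, hPkP, hP'kP⟩ : ∃ k : L, Pp ∈ k ∧ Pp' ∈ k := ⟨_, mkLine_ax hPP'⟩
  obtain ⟨kQ, hQkQ, hQ'kQ⟩ : ∃ k : L, Q ∈ k ∧ Q' ∈ k := ⟨_, mkLine_ax hQQ'⟩
  have hkPkQ : kP ≠ kQ := fun e =>
    hP'l (line_eq_of_ne H.Pp_ne_Q hPkP (e ▸ hQkQ) H.hPl H.hQl ▸ hP'kP)
  have hOO₂ : O = O₂ := point_eq_of_ne hkPkQ (hOP kP hPkP hP'kP) (hOQ kQ hQkQ hQ'kQ)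
    (hO₂P kP hPkP hP'kP) (hO₂Q kQ hQkQ hQ'kQ)
  exact ⟨O, ⟨kQ, hQkQ, hQ'kQ, hOQ kQ hQkQ hQ'kQ⟩, hOO₂ ▸ hR, hS, hOq, hOq', hOO₂ ▸ hO₂m,
    hOO₂ ▸ hO₂m'⟩

theorem center_notMem_n (H : HarmonicConfig A B C D ab l r m p q n R Pp Q S)
    (H' : HarmonicConfig A B C D' ab l' r' m' p' q' n' R' Pp' Q' S') {O : P}
    (hQ : Col P L Q Q' O) (hR : Col P L R R' O) (hS : Col P L S S' O) (hQ'q : Q' ∉ q)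
    (hQ'm : Q' ∉ m) (hnn' : n ≠ n') : O ∉ n := by
  intro hOn
  obtain ⟨kQ, hQkQ, hQ'kQ, hOkQ⟩ := hQ
  obtain ⟨kR, hRkR, hR'kR, hOkR⟩ := hR
  obtain ⟨kS, hSkS, hS'kS, hOkS⟩ := hS
  have hOS : O ≠ S := fun e =>
    hQ'q (line_eq_of_ne H.S_ne_Q.symm hQkQ (e ▸ hOkQ) H.hQq H.hSq ▸ hQ'kQ)
  have hOR : O ≠ R := fun e =>
    hQ'm (line_eq_of_ne H.Q_ne_R hQkQ (e ▸ hOkQ) H.hQm H.hRm ▸ hQ'kQ)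
  have hS'n : S' ∈ n := line_eq_of_ne hOS hOkS hSkS hOn H.hSn ▸ hS'kS
  have hR'n : R' ∈ n := line_eq_of_ne hOR hOkR hRkR hOn H.hRn ▸ hR'kR
  exact hnn' (line_eq_of_ne H'.S_ne_R.symm hR'n hS'n H'.hRn H'.hSn)

/-- Desargues for `Q R S` and `Q' R' S'`: the axis passes through `m·m' = A` and `q·q' = B`, so it
is `ab`, and it also passes through `n·n'`. -/
theorem eq_of_center (hdes : DesarguesProperty P L)
    (H : HarmonicConfig A B C D ab l r m p q n R Pp Q S)
    (H' : HarmonicConfig A B C D' ab l' r' m' p' q' n' R' Pp' Q' S') {O : P}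
    (hQ : Col P L Q Q' O) (hR : Col P L R R' O) (hS : Col P L S S' O)
    (hOq : O ∉ q) (hOq' : O ∉ q') (hOm : O ∉ m) (hOm' : O ∉ m') (hRR' : R ≠ R') (hSS' : S ≠ S')
    (hQ'q : Q' ∉ q) (hQ'm : Q' ∉ m) (hQq' : Q ∉ q') (hQm' : Q ∉ m') : D = D' := by
  by_cases hnn' : n = n'
  · subst hnn'
    exact point_eq_of_ne H.n_ne_ab H.hDn H.hD H'.hDn H'.hD
  have hmm' : m ≠ m' := fun e => hQ'm (e ▸ H'.hQm)
  have hqq' : q ≠ q' := fun e => hQ'q (e ▸ H'.hQq)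
  obtain ⟨h, ⟨X, hXm, hXm', hXh⟩, ⟨Y, hYn, hYn', hYh⟩, ⟨Z, hZq, hZq', hZh⟩, -⟩ :=
    hdes Q R S Q' R' S' m n q m' n' q' O H.isTriangle_QRS H'.isTriangle_QRS
      ⟨fun e => hQ'q (e ▸ H.hQq), hRR', hSS', hmm', hnn', hqq'⟩
      ⟨hQ, hR, hS, hOm, H.center_notMem_n H' hQ hR hS hQ'q hQ'm hnn', hOq, hOm',
        H'.center_notMem_n H hQ.swap hR.swap hS.swap hQq' hQm' (Ne.symm hnn'),
        hOq'⟩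
  have hAh : A ∈ h := point_eq_of_ne hmm' hXm hXm' H.hAm H'.hAm ▸ hXh
  have hBh : B ∈ h := point_eq_of_ne hqq' hZq hZq' H.hBq H'.hBq ▸ hZh
  have hYab : Y ∈ ab := line_eq_of_ne H.hAB hAh hBh H.hA H.hB ▸ hYh
  exact (point_eq_of_ne H.n_ne_ab H.hDn H.hD hYn hYab).trans
    (point_eq_of_ne H'.n_ne_ab hYn' hYab H'.hDn H'.hD)

theorem eq_of_generic (hdes : DesarguesProperty P L)
    (H : HarmonicConfig A B C D ab l r m p q n R Pp Q S)
    (H' : HarmonicConfig A B C D' ab l' r' m' p' q' n' R' Pp' Q' S')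
    (hP'l : Pp' ∉ l) (hQ'l : Q' ∉ l) (hPl' : Pp ∉ l') (hP'p : Pp' ∉ p) (hQ'q : Q' ∉ q)
    (hP'r : Pp' ∉ r) (hQ'm : Q' ∉ m) : D = D' := by
  obtain ⟨O, hQ, hR, hS, hOq, hOq', hOm, hOm'⟩ :=
    H.exists_center hdes H' hP'l hQ'l hPl' hP'p hQ'q hP'r hQ'm
  have hpp' : p ≠ p' := fun e => hP'p (e ▸ H'.hPp)
  have hqq' : q ≠ q' := fun e => hQ'q (e ▸ H'.hQq)
  have hmm' : m ≠ m' := fun e => hQ'm (e ▸ H'.hQm)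
  refine H.eq_of_center hdes H' hQ hR hS hOq hOq' hOm hOm' ?_ ?_ hQ'q hQ'm ?_ ?_
  · exact fun e => hP'r (line_eq_of_ne H'.R_ne_B (e ▸ H.hRr) H.hBr H'.hRr H'.hBr ▸ H'.hPr)
  · exact fun e => H.S_ne_A (point_eq_of_ne hpp' H.hSp (e ▸ H'.hSp) H.hAp H'.hAp)
  · exact fun h => hqq' (line_eq_of_ne H.Q_ne_B H.hQq H.hBq h H'.hBq)
  · exact fun h => hmm' (line_eq_of_ne H.Q_ne_A H.hQm H.hAm h H'.hAm)

/-- Both configurations agree with the one built on `R'` and a line through `C` avoiding six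
points: with `H` by general position, with `H'` because they share `R'`. -/
theorem eq_of_R'_mem_l (hdes : DesarguesProperty P L) (h8 : LinesHaveAtLeast P L 8)
    (H : HarmonicConfig A B C D ab l r m p q n R Pp Q S)
    (H' : HarmonicConfig A B C D' ab l' r' m' p' q' n' R' Pp' Q' S')
    (hR'l : R' ∈ l) (hR'r : R' ∉ r) (hR'm : R' ∉ m) : D = D' := by
  have hr'p : r' ≠ p := fun e => H.B_notMem_p (e ▸ H'.hBr)
  have hm'q : m' ≠ q := fun e => H.A_notMem_q (e ▸ H'.hAm)
  obtain ⟨l₀, hCl₀, hl₀ab, hl₀⟩ := exists_line_forall_notMem h8 H.hC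
    [Pp, mkPoint hr'p, mkPoint hm'q, Pp', Q', R']
    (by
      simp only [List.mem_cons, List.not_mem_nil, or_false, not_or]
      exact ⟨H.Pp_ne_C.symm, fun e => H.C_notMem_p (e ▸ (mkPoint_ax hr'p).2),
        fun e => H.C_notMem_q (e ▸ (mkPoint_ax hm'q).2), H'.Pp_ne_C.symm, H'.Q_ne_C.symm,
        H'.R_ne_C.symm⟩)
    (by simp)
  obtain ⟨p₀, q₀, n₀, Pp₀, Q₀, S₀, D₀, H₀⟩ := HarmonicConfig.exists_of_line H.hA H.hB H.hC
    H.hAB H.hCA H.hCB hCl₀ hl₀ab H'.hRab (hl₀ R' (by simp)) H'.hBr H'.hRr H'.hAm H'.hRm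
  have hr'l : r' ≠ l := fun e => H.B_notMem_l (e ▸ H'.hBr)
  have hm'l : m' ≠ l := fun e => H.A_notMem_l (e ▸ H'.hAm)
  have hr'r : r' ≠ r := fun e => hR'r (e ▸ H'.hRr)
  have hm'm : m' ≠ m := fun e => hR'm (e ▸ H'.hRm)
  calc D = D₀ := H.eq_of_generic hdes H₀
        (fun h => H₀.hRl (point_eq_of_ne hr'l H₀.hPr h H₀.hRr hR'l ▸ H₀.hPl))
        (fun h => H₀.hRl (point_eq_of_ne hm'l H₀.hQm h H₀.hRm hR'l ▸ H₀.hQl))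
        (hl₀ Pp (by simp))
        (fun h => hl₀ _ (by simp)
          (point_eq_of_ne hr'p H₀.hPr h (mkPoint_ax hr'p).1 (mkPoint_ax hr'p).2 ▸ H₀.hPl))
        (fun h => hl₀ _ (by simp)
          (point_eq_of_ne hm'q H₀.hQm h (mkPoint_ax hm'q).1 (mkPoint_ax hm'q).2 ▸ H₀.hQl))
        (fun h => H₀.B_notMem_l (point_eq_of_ne hr'r H₀.hPr h H₀.hBr H.hBr ▸ H₀.hPl))
        (fun h => H₀.A_notMem_l (point_eq_of_ne hm'm H₀.hQm h H₀.hAm H.hAm ▸ H₀.hQl))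
    _ = D' := (H'.eq_of_same_R hdes H₀ (hl₀ Pp' (by simp)) (hl₀ Q' (by simp))).symm

/-- Move from `H` to a line `l₁ ∌ R'`, then to a center `R₂ ∈ l₁` in general position; its
configuration on the line `l₃ = CR'` connects to `H'` because `R' ∈ l₃`. -/
theorem unique (hdes : DesarguesProperty P L) (h8 : LinesHaveAtLeast P L 8)
    (H : HarmonicConfig A B C D ab l r m p q n R Pp Q S)
    (H' : HarmonicConfig A B C D' ab l' r' m' p' q' n' R' Pp' Q' S') : D = D' := by
  obtain ⟨l₁, hCl₁, hl₁ab, hl₁⟩ := exists_line_forall_notMem h8 H.hC [Pp, Q, R, R']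
    (by
      simp only [List.mem_cons, List.not_mem_nil, or_false, not_or]
      exact ⟨H.Pp_ne_C.symm, H.Q_ne_C.symm, H.R_ne_C.symm, H'.R_ne_C.symm⟩)
    (by simp)
  obtain ⟨p₁, q₁, n₁, Pp₁, Q₁, S₁, D₁, H₁⟩ := HarmonicConfig.exists_of_line H.hA H.hB H.hC
    H.hAB H.hCA H.hCB hCl₁ hl₁ab H.hRab (hl₁ R (by simp)) H.hBr H.hRr H.hAm H.hRm
  obtain ⟨l₃, hCl₃, hR'l₃⟩ : ∃ k : L, C ∈ k ∧ R' ∈ k := ⟨_, mkLine_ax H'.R_ne_C.symm⟩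
  obtain ⟨R₂, hR₂l₁, hR₂⟩ := exists_mem_forall_notMem h8 l₁ [ab, r, m, r', m', l₃]
    (by
      simp only [List.mem_cons, List.not_mem_nil, or_false]
      rintro k (rfl | rfl | rfl | rfl | rfl | rfl)
      exacts [hl₁ab.symm, H₁.r_ne_l, H₁.m_ne_l, fun e => H₁.B_notMem_l (e ▸ H'.hBr),
        fun e => H₁.A_notMem_l (e ▸ H'.hAm), fun e => hl₁ R' (by simp) (e ▸ hR'l₃)])
    (by simp)
  have hR₂ab : R₂ ∉ ab := hR₂ ab (by simp)
  have hR₂B : R₂ ≠ B := fun e => hR₂ab (e ▸ H.hB)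
  have hR₂A : R₂ ≠ A := fun e => hR₂ab (e ▸ H.hA)
  obtain ⟨r₂, hBr₂, hR₂r₂⟩ : ∃ k : L, B ∈ k ∧ R₂ ∈ k := ⟨_, mkLine_ax hR₂B.symm⟩
  obtain ⟨m₂, hAm₂, hR₂m₂⟩ : ∃ k : L, A ∈ k ∧ R₂ ∈ k := ⟨_, mkLine_ax hR₂A.symm⟩
  obtain ⟨p₃, q₃, n₃, Pp₃, Q₃, S₃, D₃, H₃⟩ := HarmonicConfig.exists_of_line H.hA H.hB H.hC
    H.hAB H.hCA H.hCB hCl₃ (fun e => H'.hRab (e ▸ hR'l₃)) hR₂ab (hR₂ l₃ (by simp))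
    hBr₂ hR₂r₂ hAm₂ hR₂m₂
  calc D = D₁ := H.eq_of_same_R hdes H₁ (hl₁ Pp (by simp)) (hl₁ Q (by simp))
    _ = D₃ := H₁.eq_of_R'_mem_l hdes h8 H₃ hR₂l₁ (hR₂ r (by simp)) (hR₂ m (by simp))
    _ = D' := H₃.eq_of_R'_mem_l hdes h8 H' hR'l₃
        (fun h => hR₂ r' (by simp) (line_eq_of_ne H'.R_ne_B h hBr₂ H'.hRr H'.hBr ▸ hR₂r₂))
        (fun h => hR₂ m' (by simp) (line_eq_of_ne H'.R_ne_A h hAm₂ H'.hRm H'.hAm ▸ hR₂m₂))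

end HarmonicConfig

theorem IsHarmonic.unique (hdes : DesarguesProperty P L) (h8 : LinesHaveAtLeast P L 8)
    {A B C D D' : P} (h : IsHarmonic P L A B C D) (h' : IsHarmonic P L A B C D') : D = D' := by
  by_cases hCA : C = A
  · subst hCA
    rw [h.eq_left, h'.eq_left]
  by_cases hCB : C = B
  · subst hCB
    rw [h.eq_right, h'.eq_right]
  obtain ⟨ab, l, r, m, p, q, n, R, Pp, Q, S, H⟩ := HarmonicConfig.exists_of_isHarmonic h hCA hCB
  obtain ⟨ab', l', r', m', p', q', n', R', Pp', Q', S', H'⟩ :=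
    HarmonicConfig.exists_of_isHarmonic h' hCA hCB
  obtain rfl : ab = ab' := line_eq_of_ne H.hAB H.hA H.hB H'.hA H'.hB
  exact H.unique hdes h8 H'

end Uniqueness

section Projectivity

variable {P L} [ProjectivePlane P L]

/-- The perspectivities are `X ↦ Pp = QX·BR ↦ S = APp·BQ ↦ RS·ab`, which is the harmonic
construction on the line `QX`, except for `X = A`, where `QX = AR` passes through `R`. -/
theorem exists_isProjectivity_eq_of_isHarmonic (hdes : DesarguesProperty P L)
    (h8 : LinesHaveAtLeast P L 8) {A B : P} (hAB : A ≠ B) {ab : L} (hA : A ∈ ab) (hB : B ∈ ab) :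
    ∃ f : Rng P L ab → Rng P L ab, IsProjectivity P L ab ab f ∧
      ∀ (X : Rng P L ab) (D : P), IsHarmonic P L A B X D → (f X : P) = D := by
  obtain ⟨R, hRab⟩ := Nondegenerate.exists_point (P := P) ab
  have hRA : R ≠ A := fun e => hRab (e ▸ hA)
  have hRB : R ≠ B := fun e => hRab (e ▸ hB)
  obtain ⟨m, hAm, hRm⟩ : ∃ k : L, A ∈ k ∧ R ∈ k := ⟨_, mkLine_ax hRA.symm⟩
  obtain ⟨r, hBr, hRr⟩ : ∃ k : L, B ∈ k ∧ R ∈ k := ⟨_, mkLine_ax hRB.symm⟩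
  obtain ⟨Q, hQm, hQ⟩ := exists_mem_forall_ne h8 m [A, R] (by simp)
  have hmab : m ≠ ab := fun e => hRab (e ▸ hRm)
  have hQab : Q ∉ ab := fun h => hQ A (by simp) (point_eq_of_ne hmab hQm h hAm hA)
  have hBQ : B ≠ Q := fun e => hQab (e ▸ hB)
  obtain ⟨q, hBq, hQq⟩ : ∃ k : L, B ∈ k ∧ Q ∈ k := ⟨_, mkLine_ax hBQ⟩
  have hAr : A ∉ r := fun h => hRab (line_eq_of_ne hAB h hBr hA hB ▸ hRr)
  have hQr : Q ∉ r := fun h =>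
    hQ R (by simp) (point_eq_of_ne (show m ≠ r from fun e => hAr (e ▸ hAm)) hQm h hRm hRr)
  have hAq : A ∉ q := fun h => hQab (line_eq_of_ne hAB h hBq hA hB ▸ hQq)
  have hRq : R ∉ q := fun h => hQr (line_eq_of_ne hRB h hBq hRr hBr ▸ hQq)
  set f₁ := perspectivity hQab hQr
  set f₂ := perspectivity hAr hAq
  set f₃ := perspectivity hRq hRab
  refine ⟨f₃ ∘ f₂ ∘ f₁,
    .comp (.comp (.persp (isPerspectivity_perspectivity hQab hQr))
      (.persp (isPerspectivity_perspectivity hAr hAq)))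
      (.persp (isPerspectivity_perspectivity hRq hRab)),
    fun X D hXD => ?_⟩
  by_cases hXA : (X : P) = A
  · have e₁ : (f₁ X : P) = R := perspectivity_eq hQab hQr X hQm (hXA ▸ hAm) hRm hRr
    have e₂ : (f₂ (f₁ X) : P) = Q := perspectivity_eq hAr hAq _ hAm (e₁ ▸ hRm) hQm hQq
    have e₃ : (f₃ (f₂ (f₁ X)) : P) = A := perspectivity_eq hRq hRab _ hRm (e₂ ▸ hQm) hAm hA
    rw [hXA] at hXD
    exact e₃.trans hXD.eq_left.symm
  obtain ⟨l, hQl, hXl, hPl⟩ := perspectivity_spec hQab hQr X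
  obtain ⟨p, hAp, hPp, hSp⟩ := perspectivity_spec hAr hAq (f₁ X)
  obtain ⟨n, hRn, hSn, hDn⟩ := perspectivity_spec hRq hRab (f₂ (f₁ X))
  have hRl : R ∉ l := fun h => hXA (point_eq_of_ne hmab
    (line_eq_of_ne (hQ R (by simp)) hQl h hQm hRm ▸ hXl) X.2 hAm hA)
  exact IsHarmonic.unique hdes h8 ⟨hAB, ab, l, R, f₁ X, Q, f₂ (f₁ X), hA, hB, X.2, hXl,
    fun e => hQab (e ▸ hQl), hRab, hRl, hPl, ⟨r, hBr, hRr, (f₁ X).2⟩, hQl, ⟨m, hAm, hRm, hQm⟩,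
    ⟨p, hAp, hPp, hSp⟩, ⟨q, hBq, hQq, (f₂ (f₁ X)).2⟩, (f₃ (f₂ (f₁ X))).2, ⟨n, hRn, hSn, hDn⟩⟩ hXD

end Projectivity

/-- **Harmonic conjugacy is an involution.** Let `A ≠ B` and let `ab` be the
line `AB`.  If `u` is the map on the range of `ab` sending each point `X` to
its harmonic conjugate `h(A,B;X)`, then `u` is a projectivity of the range of
`ab` onto itself, `u ∘ u` is the identity, and `u` is not the identity. -/
theorem harmonic_involution
    [Configuration.ProjectivePlane P L]
    (hdes : DesarguesProperty P L) (hfano : FanoAxiom P L)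
    (h8 : LinesHaveAtLeast P L 8)
    (A B : P) (hAB : A ≠ B) (ab : L) (hA : A ∈ ab) (hB : B ∈ ab)
    (u : Rng P L ab → Rng P L ab)
    (hu : ∀ X : Rng P L ab, IsHarmonic P L A B (X : P) ((u X : P))) :
    IsProjectivity P L ab ab u ∧ u ∘ u = id ∧ u ≠ id := by
  obtain ⟨f, hf, hf_eq⟩ := exists_isProjectivity_eq_of_isHarmonic hdes h8 hAB hA hB
  have hu_eq : u = f := funext fun X => Subtype.ext (hf_eq X _ (hu X)).symm
  refine ⟨hu_eq ▸ hf, funext fun X => Subtype.ext ?_, fun hid => ?_⟩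
  · show (u (u X) : P) = X
    exact ((hu X).symm.unique hdes h8 (hu (u X))).symm
  · obtain ⟨C, hC, hCAB⟩ := exists_mem_forall_ne h8 ab [A, B] (by simp)
    exact (hu ⟨C, hC⟩).ne hfano (hCAB A (by simp)) (hCAB B (by simp))
      (congrArg Subtype.val (congrFun hid ⟨C, hC⟩))
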